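/- Combining the three propagation identities, under the unit-block model with ReLU the gradient variance ratio satisfies Var[∂L/∂x^l] / Var[∂L/∂x^{l+1}] = (n_out/n_in)·(1 + 4/n_g), where n_g = n_out/G; in particular this ratio equals 1 precisely when G = (n_in − n_out)/4. -/

import Mathlib

/-! The three identities chain multiplicatively: the weight variance cancels between
`n_out · Var[W]` and `1/σ² = 2/(n_in · Var[W])`, and the ReLU factor `1/2` cancels the `2`,
leaving `(n_out/n_in)(1 + 4/n_g)`. Since `4/n_g = 4G/n_out`, this equals `(n_out + 4G)/n_in`,
which is `1` exactly when `n_out + 4G = n_in`. -/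

theorem backward_variance_ratio_of_chain {n_in n_out VW σ2 c VarX VarY VarZ VarX' : ℝ}
    (hin : n_in ≠ 0) (hVW : VW ≠ 0) (hVarX' : VarX' ≠ 0)
    (hσ2 : σ2 = n_in * (1 / 2) * VW)
    (hX : VarX = n_out * VW * VarY)
    (hY : VarY = (1 / σ2) * c * VarZ)
    (hZ : VarZ = (1 / 2) * VarX') :
    VarX / VarX' = n_out / n_in * c := by
  subst hX hY hZ hσ2
  field_simp

theorem mul_one_add_four_div_group_size {n_in n_out : ℝ} (G : ℝ) (hout : n_out ≠ 0) :
    n_out / n_in * (1 + 4 / (n_out / G)) = (n_out + 4 * G) / n_in := by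
  rw [div_div_eq_mul_div]
  field_simp

theorem unit_block_gradient_variance_ratio_general
    (n_in n_out G : ℕ) (hin : 0 < n_in) (hout : 0 < n_out)
    (VW σ2 n_g VarX VarY VarZ VarX' : ℝ) (hVW : 0 < VW) (hVarX' : 0 < VarX')
    (hng : n_g = (n_out : ℝ) / G)
    (hσ2 : σ2 = (n_in : ℝ) * (1 / 2) * VW)
    (hX : VarX = (n_out : ℝ) * VW * VarY)
    (hY : VarY = (1 / σ2) * (1 + 4 / n_g) * VarZ)
    (hZ : VarZ = (1 / 2) * VarX') :
    VarX / VarX' = ((n_out : ℝ) / n_in) * (1 + 4 / n_g) ∧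
    (VarX / VarX' = 1 ↔ (G : ℝ) = ((n_in : ℝ) - n_out) / 4) := by
  have hinR : (n_in : ℝ) ≠ 0 := by positivity
  have hratio := backward_variance_ratio_of_chain hinR hVW.ne' hVarX'.ne' hσ2 hX hY hZ
  refine ⟨hratio, ?_⟩
  rw [hratio, hng, mul_one_add_four_div_group_size _ (by positivity), div_eq_one_iff_eq hinR]
  constructor <;> intro h <;> linarith

/-- Combining the three propagation identities of the unit block (linear layer,
group normalization with group size `n_g = n_out/G`, ReLU): the gradient variance
ratio satisfies `Var[∂L/∂x^l]/Var[∂L/∂x^{l+1}] = (n_out/n_in)(1 + 4/n_g)`, and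
this ratio equals `1` precisely when `G = (n_in − n_out)/4`. -/
theorem unit_block_gradient_variance_ratio
    (n_in n_out G : ℕ) (hin : 0 < n_in) (hout : 0 < n_out) (hG : 0 < G)
    (VW σ2 n_g VarX VarY VarZ VarX' : ℝ) (hVW : 0 < VW) (hVarX' : 0 < VarX')
    (hng : n_g = (n_out : ℝ) / G)
    (hσ2 : σ2 = (n_in : ℝ) * (1 / 2) * VW)
    (hX : VarX = (n_out : ℝ) * VW * VarY)
    (hY : VarY = (1 / σ2) * (1 + 4 / n_g) * VarZ)
    (hZ : VarZ = (1 / 2) * VarX') :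
    VarX / VarX' = ((n_out : ℝ) / n_in) * (1 + 4 / n_g) ∧
    (VarX / VarX' = 1 ↔ (G : ℝ) = ((n_in : ℝ) - n_out) / 4) :=
  unit_block_gradient_variance_ratio_general n_in n_out G hin hout VW σ2 n_g VarX VarY VarZ VarX'
    hVW hVarX' hng hσ2 hX hY hZ
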